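/- Global discrete pseudo-energy identity: let φ^0 be a periodic grid function, set φ^{−1} := φ^0 and ψ^0 := 0, and suppose that for each k = 0, 1, ..., ℓ−1 the pair (φ^{k+1}, ψ^{k+1}) is a periodic solution of the second-order convex splitting scheme with data (φ^{k−1}, φ^k, ψ^k). Then F̃(φ^ℓ, φ^{ℓ−1}, ψ^ℓ) + s·Σ_{k=0}^{ℓ−1} ‖ψ^{k+1/2}‖_{−1}² + (s⁴/2)·Σ_{k=0}^{ℓ−1} ‖∇_h(D_s²φ^k)‖₂² = F(φ^0), where ψ^{k+1/2} = (ψ^{k+1} + ψ^k)/2 and D_s²φ^k = (φ^{k+1} − 2φ^k + φ^{k−1})/s². -/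

import Mathlib

open Finset

noncomputable section

/-- Periodic grid functions on an `m × n` grid (indices taken modulo `m` and `n`). -/
abbrev Grid (m n : ℕ) := ZMod m × ZMod n → ℝ

/-- Forward difference in the `x` direction. -/
def Dx {m n : ℕ} (h : ℝ) (φ : Grid m n) : Grid m n :=
  fun p => (φ (p.1 + 1, p.2) - φ p) / h

/-- Forward difference in the `y` direction. -/
def Dy {m n : ℕ} (h : ℝ) (φ : Grid m n) : Grid m n :=
  fun p => (φ (p.1, p.2 + 1) - φ p) / h

/-- The five-point discrete Laplacian. -/
def lapH {m n : ℕ} (h : ℝ) (φ : Grid m n) : Grid m n :=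
  fun p => (φ (p.1 + 1, p.2) + φ (p.1 - 1, p.2) + φ (p.1, p.2 + 1) + φ (p.1, p.2 - 1)
    - 4 * φ p) / h ^ 2

/-- The discrete chemical potential `μ` of the second-order convex splitting scheme,
built from `φ^{k−1} = φm`, `φ^k = φk` and the unknown `φ^{k+1} = φn`. -/
def chemPot {m n : ℕ} (α h : ℝ) (φm φk φn : Grid m n) : Grid m n :=
  fun p => (φn p ^ 2 + φk p ^ 2) / 2 * ((φn p + φk p) / 2)
    + α * ((φn p + φk p) / 2)
    + lapH h (fun q => 3 * φk q - φm q) p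
    + lapH h (lapH h (fun q => (φn q + φk q) / 2)) p

/-- The second-order convex splitting scheme for the MPFC equation:
`β(ψ^{k+1} − ψ^k) = s Δₕμ − s ψ^{k+1/2}` and `φ^{k+1} − φ^k = s ψ^{k+1/2}`. -/
def Scheme {m n : ℕ} (β α s h : ℝ) (φm φk ψk φn ψn : Grid m n) : Prop :=
  (∀ p, β * (ψn p - ψk p)
      = s * lapH h (chemPot α h φm φk φn) p - s * ((ψn p + ψk p) / 2)) ∧
  (∀ p, φn p - φk p = s * ((ψn p + ψk p) / 2))

/-- Discrete `L²` norm. -/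
def norm2 {m n : ℕ} [NeZero m] [NeZero n] (h : ℝ) (φ : Grid m n) : ℝ :=
  Real.sqrt (h ^ 2 * ∑ p : ZMod m × ZMod n, φ p ^ 2)

/-- Discrete `L²` norm of the gradient. -/
def gradNorm2 {m n : ℕ} [NeZero m] [NeZero n] (h : ℝ) (φ : Grid m n) : ℝ :=
  Real.sqrt (h ^ 2 * ∑ p : ZMod m × ZMod n, (Dx h φ p ^ 2 + Dy h φ p ^ 2))

/-- Discrete `L⁴` norm. -/
def norm4 {m n : ℕ} [NeZero m] [NeZero n] (h : ℝ) (φ : Grid m n) : ℝ :=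
  (h ^ 2 * ∑ p : ZMod m × ZMod n, φ p ^ 4) ^ ((1 : ℝ) / 4)

/-- The discrete MPFC energy
`F(φ) = ¼‖φ‖₄⁴ + (α/2)‖φ‖₂² − ‖∇ₕφ‖₂² + ½‖Δₕφ‖₂²`. -/
def energyF {m n : ℕ} [NeZero m] [NeZero n] (α h : ℝ) (φ : Grid m n) : ℝ :=
  1 / 4 * norm4 h φ ^ 4 + α / 2 * norm2 h φ ^ 2 - gradNorm2 h φ ^ 2
    + 1 / 2 * norm2 h (lapH h φ) ^ 2

/-- `u` is the mean-zero periodic solution of the discrete Poisson problem `−Δₕu = ψ`;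
the "−1" norm of `ψ` is then `‖∇ₕu‖₂`. -/
def IsNegLapSol {m n : ℕ} [NeZero m] [NeZero n] (h : ℝ) (ψ u : Grid m n) : Prop :=
  (∑ p : ZMod m × ZMod n, u p = 0) ∧ ∀ p, -(lapH h u p) = ψ p

/-- The modified discrete pseudo-energy
`F̃(φ, φ̃, ψ) = F(φ) + (β/2)‖ψ‖_{−1}² + ½‖∇ₕ(φ − φ̃)‖₂²`, expressed through the
mean-zero solution `u` of `−Δₕu = ψ`, so that `‖ψ‖_{−1} = ‖∇ₕu‖₂`. -/
def Ftilde {m n : ℕ} [NeZero m] [NeZero n] (β α h : ℝ) (φ φt u : Grid m n) : ℝ :=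
  energyF α h φ + β / 2 * gradNorm2 h u ^ 2
    + 1 / 2 * gradNorm2 h (fun p => φ p - φt p) ^ 2

/-!
Testing the `ψ`-equation of step `k` against the potential `u^{k+1/2} = (-Δₕ)⁻¹ψ^{k+1/2}` and
using `φ^{k+1} - φ^k = s ψ^{k+1/2}` turns `s⟨Δₕμ, u^{k+1/2}⟩` into `-⟨μ, φ^{k+1} - φ^k⟩`, which
summation by parts evaluates as a difference of energies. This gives the one-step identity
`F̃(φ^{k+1}, φ^k, ψ^{k+1}) + s‖ψ^{k+1/2}‖₋₁² + (s⁴/2)‖∇ₕD_s²φ^k‖₂² = F̃(φ^k, φ^{k-1}, ψ^k)`,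
which telescopes to the claim since `F̃(φ^0, φ^{-1}, ψ^0) = F(φ^0)`. Potentials of the `ψ^k`
themselves are built from those of the `ψ^{k+1/2}` via `ψ^{k+1} = 2ψ^{k+1/2} - ψ^k`; the `-1` norm
does not depend on which potential is used. All identities are proved for plain sums over the
grid, without the factor `h²`.
-/

theorem sum_second_diff_mul {G : Type*} [AddCommGroup G] [Fintype G] (e : G) (φ χ : G → ℝ) :
    ∑ x, (φ (x + e) + φ (x - e) - 2 * φ x) * χ x
      = -∑ x, (φ (x + e) - φ x) * (χ (x + e) - χ x) := by
  have hshift (f : G → ℝ) : ∑ x, f (x + e) = ∑ x, f x := Equiv.sum_comp (Equiv.addRight e) f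
  have h₁ := hshift fun x => φ x * χ x
  have h₂ := hshift fun x => φ (x - e) * χ x
  simp only [add_sub_cancel_right] at h₂
  rw [eq_neg_iff_add_eq_zero, ← sum_add_distrib]
  calc ∑ x, ((φ (x + e) + φ (x - e) - 2 * φ x) * χ x + (φ (x + e) - φ x) * (χ (x + e) - χ x))
      = ∑ x, ((φ (x + e) * χ (x + e) - φ x * χ x) + (φ (x - e) * χ x - φ x * χ (x + e))) :=
        sum_congr rfl fun x _ => by ring
    _ = 0 := by rw [sum_add_distrib, sum_sub_distrib, sum_sub_distrib, h₁, h₂]; ring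

variable {m n : ℕ}

theorem lapH_two_mul_sub (h : ℝ) (u v : Grid m n) (p : ZMod m × ZMod n) :
    lapH h (fun q => 2 * u q - v q) p = 2 * lapH h u p - lapH h v p := by
  simp only [lapH]; ring

def potentialSeq (uhalf : ℕ → Grid m n) : ℕ → Grid m n
  | 0 => fun _ => 0
  | k + 1 => fun p => 2 * uhalf k p - potentialSeq uhalf k p

theorem neg_lapH_potentialSeq {h : ℝ} {ℓ : ℕ} {ψ uhalf : ℕ → Grid m n}
    (hψ0 : ψ 0 = fun _ => 0)
    (huhalf : ∀ k < ℓ, ∀ p, -lapH h (uhalf k) p = (ψ (k + 1) p + ψ k p) / 2) :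
    ∀ k ≤ ℓ, ∀ p, -lapH h (potentialSeq uhalf k) p = ψ k p := by
  intro k
  induction k with
  | zero => intro _ p; simp [potentialSeq, lapH, hψ0]
  | succ k ih =>
    intro hk p
    rw [potentialSeq, lapH_two_mul_sub]
    linear_combination 2 * huhalf k hk p - ih (Nat.le_of_succ_le hk) p

variable [NeZero m] [NeZero n]

def gradInner (h : ℝ) (φ χ : Grid m n) : ℝ := Dx h φ ⬝ᵥ Dx h χ + Dy h φ ⬝ᵥ Dy h χ

theorem gradInner_comm (h : ℝ) (φ χ : Grid m n) : gradInner h φ χ = gradInner h χ φ := by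
  simp only [gradInner, dotProduct_comm]

theorem lapH_dotProduct (h : ℝ) (φ χ : Grid m n) : lapH h φ ⬝ᵥ χ = -gradInner h φ χ := by
  have hx := sum_second_diff_mul ((1, 0) : ZMod m × ZMod n) φ χ
  have hy := sum_second_diff_mul ((0, 1) : ZMod m × ZMod n) φ χ
  have e₁ (x : ZMod m × ZMod n) : x + (1, 0) = (x.1 + 1, x.2) := Prod.ext rfl (add_zero _)
  have e₂ (x : ZMod m × ZMod n) : x - (1, 0) = (x.1 - 1, x.2) := Prod.ext rfl (sub_zero _)
  have e₃ (x : ZMod m × ZMod n) : x + (0, 1) = (x.1, x.2 + 1) := Prod.ext (add_zero _) rfl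
  have e₄ (x : ZMod m × ZMod n) : x - (0, 1) = (x.1, x.2 - 1) := Prod.ext (sub_zero _) rfl
  simp only [e₁, e₂, e₃, e₄] at hx hy
  have hlap : lapH h φ ⬝ᵥ χ = ((∑ x, (φ (x.1 + 1, x.2) + φ (x.1 - 1, x.2) - 2 * φ x) * χ x)
      + ∑ x, (φ (x.1, x.2 + 1) + φ (x.1, x.2 - 1) - 2 * φ x) * χ x) / h ^ 2 := by
    simp only [dotProduct, lapH, ← sum_add_distrib, sum_div]
    exact sum_congr rfl fun x _ => by ring
  have hgrad : gradInner h φ χ = ((∑ x, (φ (x.1 + 1, x.2) - φ x) * (χ (x.1 + 1, x.2) - χ x))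
      + ∑ x, (φ (x.1, x.2 + 1) - φ x) * (χ (x.1, x.2 + 1) - χ x)) / h ^ 2 := by
    simp only [gradInner, dotProduct, Dx, Dy, ← sum_add_distrib, sum_div]
    exact sum_congr rfl fun x _ => by ring
  rw [hlap, hgrad, hx, hy]
  ring

theorem lapH_dotProduct_comm (h : ℝ) (φ χ : Grid m n) : lapH h φ ⬝ᵥ χ = φ ⬝ᵥ lapH h χ := by
  rw [lapH_dotProduct, dotProduct_comm φ, lapH_dotProduct, gradInner_comm]

theorem dotProduct_eq_gradInner_of_neg_lapH {h : ℝ} {ψ u : Grid m n}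
    (hu : ∀ p, -lapH h u p = ψ p) (v : Grid m n) : ψ ⬝ᵥ v = gradInner h u v := by
  rw [← funext hu, ← neg_neg (gradInner h u v), ← lapH_dotProduct]
  exact neg_dotProduct _ _

theorem gradInner_self_eq_of_neg_lapH {h : ℝ} {ψ u v : Grid m n}
    (hu : ∀ p, -lapH h u p = ψ p) (hv : ∀ p, -lapH h v p = ψ p) :
    gradInner h u u = gradInner h v v := by
  rw [← dotProduct_eq_gradInner_of_neg_lapH hu u, ← dotProduct_eq_gradInner_of_neg_lapH hv v,
    dotProduct_eq_gradInner_of_neg_lapH hv u, dotProduct_eq_gradInner_of_neg_lapH hu v,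
    gradInner_comm]

def gridEnergy (α h : ℝ) (φ : Grid m n) : ℝ :=
  (∑ p, φ p ^ 4) / 4 + α / 2 * (φ ⬝ᵥ φ) - gradInner h φ φ + (lapH h φ ⬝ᵥ lapH h φ) / 2

def gridPseudoEnergy (β α h : ℝ) (φ φt u : Grid m n) : ℝ :=
  gridEnergy α h φ + β / 2 * gradInner h u u
    + gradInner h (fun p => φ p - φt p) (fun p => φ p - φt p) / 2

theorem norm2_sq (h : ℝ) (φ : Grid m n) : norm2 h φ ^ 2 = h ^ 2 * (φ ⬝ᵥ φ) := by
  rw [norm2, Real.sq_sqrt (by positivity)]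
  simp only [dotProduct, sq]

theorem gradNorm2_sq (h : ℝ) (φ : Grid m n) : gradNorm2 h φ ^ 2 = h ^ 2 * gradInner h φ φ := by
  rw [gradNorm2, Real.sq_sqrt (by positivity)]
  simp only [gradInner, dotProduct, sq, sum_add_distrib]

theorem norm4_pow_four (h : ℝ) (φ : Grid m n) : norm4 h φ ^ 4 = h ^ 2 * ∑ p, φ p ^ 4 := by
  rw [norm4, ← Real.rpow_natCast, ← Real.rpow_mul (by positivity)]
  norm_num

theorem energyF_eq_mul_gridEnergy (α h : ℝ) (φ : Grid m n) :
    energyF α h φ = h ^ 2 * gridEnergy α h φ := by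
  rw [energyF, gridEnergy, norm4_pow_four, norm2_sq, gradNorm2_sq, norm2_sq]
  ring

theorem Ftilde_eq_mul_gridPseudoEnergy (β α h : ℝ) (φ φt u : Grid m n) :
    Ftilde β α h φ φt u = h ^ 2 * gridPseudoEnergy β α h φ φt u := by
  rw [Ftilde, gridPseudoEnergy, energyF_eq_mul_gridEnergy, gradNorm2_sq, gradNorm2_sq]
  ring

theorem gradInner_div_const (h c : ℝ) (φ : Grid m n) :
    gradInner h (fun p => φ p / c) (fun p => φ p / c) = gradInner h φ φ / c ^ 2 := by
  simp only [gradInner, dotProduct, Dx, Dy, ← sum_add_distrib, sum_div]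
  exact sum_congr rfl fun p _ => by ring

theorem dotProduct_sub_eq_half_sub_gradInner {h : ℝ} {ψ₀ ψ₁ u₀ u₁ u : Grid m n}
    (hu₀ : ∀ p, -lapH h u₀ p = ψ₀ p) (hu₁ : ∀ p, -lapH h u₁ p = ψ₁ p)
    (hu : ∀ p, -lapH h u p = (ψ₁ p + ψ₀ p) / 2) :
    (fun p => ψ₁ p - ψ₀ p) ⬝ᵥ u = (gradInner h u₁ u₁ - gradInner h u₀ u₀) / 2 := by
  have hdiff (p) : -lapH h (fun q => u₁ q - u₀ q) p = ψ₁ p - ψ₀ p := by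
    rw [← hu₀, ← hu₁]; simp only [lapH]; ring
  have hmid (p) : -lapH h (fun q => (u₁ q + u₀ q) / 2) p = (ψ₁ p + ψ₀ p) / 2 := by
    rw [← hu₀, ← hu₁]; simp only [lapH]; ring
  rw [dotProduct_eq_gradInner_of_neg_lapH hdiff, gradInner_comm,
    ← dotProduct_eq_gradInner_of_neg_lapH hu, dotProduct_eq_gradInner_of_neg_lapH hmid]
  simp only [gradInner, dotProduct, Dx, Dy, ← sum_add_distrib, ← sum_sub_distrib, sum_div]
  exact sum_congr rfl fun p _ => by ring

theorem negNorm_balance {β s h : ℝ} {μ a b ψ₀ ψ₁ u₀ u₁ u : Grid m n}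
    (hψ : ∀ p, β * (ψ₁ p - ψ₀ p) = s * lapH h μ p - s * ((ψ₁ p + ψ₀ p) / 2))
    (hφ : ∀ p, a p - b p = s * ((ψ₁ p + ψ₀ p) / 2))
    (hu₀ : ∀ p, -lapH h u₀ p = ψ₀ p) (hu₁ : ∀ p, -lapH h u₁ p = ψ₁ p)
    (hu : ∀ p, -lapH h u p = (ψ₁ p + ψ₀ p) / 2) :
    β / 2 * (gradInner h u₁ u₁ - gradInner h u₀ u₀) + s * gradInner h u u
      = -(μ ⬝ᵥ fun p => a p - b p) := by
  have htested : β * ((fun p => ψ₁ p - ψ₀ p) ⬝ᵥ u)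
      = s * (lapH h μ ⬝ᵥ u) - s * ((fun p => (ψ₁ p + ψ₀ p) / 2) ⬝ᵥ u) := by
    simp only [dotProduct, mul_sum, ← sum_sub_distrib]
    exact sum_congr rfl fun p _ => by linear_combination u p * hψ p
  have hμ : s * (lapH h μ ⬝ᵥ u) = -(μ ⬝ᵥ fun p => a p - b p) := by
    rw [lapH_dotProduct_comm]
    simp only [dotProduct, mul_sum, ← sum_neg_distrib]
    exact sum_congr rfl fun p _ => by linear_combination (-(s * μ p)) * hu p + μ p * hφ p
  rw [dotProduct_sub_eq_half_sub_gradInner hu₀ hu₁ hu,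
    dotProduct_eq_gradInner_of_neg_lapH hu] at htested
  linear_combination htested + hμ

-- The explicit extrapolation `3φ^k - φ^{k-1}` of the concave term is what produces the
-- `½‖∇ₕ(φ^{k+1} - φ^k)‖₂²` part of `F̃` and the dissipation `(s⁴/2)‖∇ₕD_s²φ^k‖₂²`.
theorem gradInner_three_sub_sub (h : ℝ) (a b c : Grid m n) :
    gradInner h (fun p => 3 * b p - c p) (fun p => a p - b p)
      = gradInner h a a - gradInner h b b
        - (gradInner h (fun p => a p - b p) (fun p => a p - b p)
          - gradInner h (fun p => b p - c p) (fun p => b p - c p)) / 2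
        - gradInner h (fun p => a p - 2 * b p + c p) (fun p => a p - 2 * b p + c p) / 2 := by
  simp only [gradInner, dotProduct, Dx, Dy, ← sum_add_distrib, ← sum_sub_distrib, sum_div]
  exact sum_congr rfl fun p _ => by ring

theorem chemPot_dotProduct_sub (α h : ℝ) (a b c : Grid m n) :
    (chemPot α h c b a ⬝ᵥ fun p => a p - b p)
      = gridEnergy α h a - gridEnergy α h b
        + (gradInner h (fun p => a p - b p) (fun p => a p - b p)
          - gradInner h (fun p => b p - c p) (fun p => b p - c p)) / 2
        + gradInner h (fun p => a p - 2 * b p + c p) (fun p => a p - 2 * b p + c p) / 2 := by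
  have hsplit : (chemPot α h c b a ⬝ᵥ fun p => a p - b p)
      = (∑ p, ((a p ^ 2 + b p ^ 2) / 2 * ((a p + b p) / 2) + α * ((a p + b p) / 2)) * (a p - b p))
        + (lapH h (fun q => 3 * b q - c q) ⬝ᵥ fun p => a p - b p)
        + (lapH h (lapH h fun q => (a q + b q) / 2) ⬝ᵥ fun p => a p - b p) := by
    simp only [chemPot, dotProduct, ← sum_add_distrib]
    exact sum_congr rfl fun p _ => by ring
  have hlocal : (∑ p, ((a p ^ 2 + b p ^ 2) / 2 * ((a p + b p) / 2) + α * ((a p + b p) / 2))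
        * (a p - b p))
      = (∑ p, a p ^ 4) / 4 - (∑ p, b p ^ 4) / 4 + α / 2 * (a ⬝ᵥ a) - α / 2 * (b ⬝ᵥ b) := by
    simp only [dotProduct, mul_sum, sum_div, ← sum_sub_distrib, ← sum_add_distrib]
    exact sum_congr rfl fun p _ => by ring
  have hbilap : (lapH h (lapH h fun q => (a q + b q) / 2) ⬝ᵥ fun p => a p - b p)
      = (lapH h a ⬝ᵥ lapH h a - lapH h b ⬝ᵥ lapH h b) / 2 := by
    rw [lapH_dotProduct_comm]
    simp only [dotProduct, lapH, ← sum_sub_distrib, sum_div]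
    exact sum_congr rfl fun p _ => by ring
  rw [hsplit, hlocal, lapH_dotProduct, gradInner_three_sub_sub, hbilap, gridEnergy, gridEnergy]
  ring

theorem Scheme.step_energy_identity {β α s h : ℝ} {c b ψ₀ a ψ₁ u₀ u₁ u : Grid m n}
    (hS : Scheme β α s h c b ψ₀ a ψ₁)
    (hu₀ : ∀ p, -lapH h u₀ p = ψ₀ p) (hu₁ : ∀ p, -lapH h u₁ p = ψ₁ p)
    (hu : ∀ p, -lapH h u p = (ψ₁ p + ψ₀ p) / 2) :
    gridPseudoEnergy β α h a b u₁
        + (s * gradInner h u u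
          + gradInner h (fun p => a p - 2 * b p + c p) (fun p => a p - 2 * b p + c p) / 2)
      = gridPseudoEnergy β α h b c u₀ := by
  rw [gridPseudoEnergy, gridPseudoEnergy]
  linear_combination negNorm_balance hS.1 hS.2 hu₀ hu₁ hu - chemPot_dotProduct_sub α h a b c

theorem scheme_telescoped_energy {β α s h : ℝ} {ℓ : ℕ} {φ ψ uhalf : ℕ → Grid m n}
    (hψ0 : ψ 0 = fun _ => 0)
    (hScheme : ∀ k < ℓ, Scheme β α s h (φ (k - 1)) (φ k) (ψ k) (φ (k + 1)) (ψ (k + 1)))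
    (huhalf : ∀ k < ℓ, ∀ p, -lapH h (uhalf k) p = (ψ (k + 1) p + ψ k p) / 2) :
    gridPseudoEnergy β α h (φ ℓ) (φ (ℓ - 1)) (potentialSeq uhalf ℓ)
        + ∑ k ∈ range ℓ, (s * gradInner h (uhalf k) (uhalf k)
          + gradInner h (fun p => φ (k + 1) p - 2 * φ k p + φ (k - 1) p)
              (fun p => φ (k + 1) p - 2 * φ k p + φ (k - 1) p) / 2)
      = gridEnergy α h (φ 0) := by
  let P k := gridPseudoEnergy β α h (φ k) (φ (k - 1)) (potentialSeq uhalf k)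
  have hU := neg_lapH_potentialSeq hψ0 huhalf
  have hstep : ∀ k ∈ range ℓ, s * gradInner h (uhalf k) (uhalf k)
      + gradInner h (fun p => φ (k + 1) p - 2 * φ k p + φ (k - 1) p)
          (fun p => φ (k + 1) p - 2 * φ k p + φ (k - 1) p) / 2 = P k - P (k + 1) := by
    intro k hk
    have hk := mem_range.1 hk
    have := (hScheme k hk).step_energy_identity (hU k hk.le) (hU (k + 1) hk) (huhalf k hk)
    simp only [P, Nat.add_sub_cancel]
    linarith
  have hP0 : P 0 = gridEnergy α h (φ 0) := by
    simp [P, gridPseudoEnergy, gradInner, potentialSeq, dotProduct, Dx, Dy]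
  rw [sum_congr rfl hstep, sum_range_sub', hP0]
  exact add_sub_cancel _ _

theorem scheme_global_energy_identity_general (m n : ℕ) [NeZero m] [NeZero n]
    (β α s h : ℝ) (hs : 0 < s)
    (ℓ : ℕ) (φ ψ : ℕ → Grid m n)
    (hψ0 : ψ 0 = fun _ => 0)
    (hScheme : ∀ k < ℓ, Scheme β α s h (φ (k - 1)) (φ k) (ψ k) (φ (k + 1)) (ψ (k + 1)))
    (uhalf : ℕ → Grid m n) (uℓ : Grid m n)
    (huhalf : ∀ k < ℓ, IsNegLapSol h (fun p => (ψ (k + 1) p + ψ k p) / 2) (uhalf k))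
    (huℓ : IsNegLapSol h (ψ ℓ) uℓ) :
    Ftilde β α h (φ ℓ) (φ (ℓ - 1)) uℓ
        + s * ∑ k ∈ Finset.range ℓ, gradNorm2 h (uhalf k) ^ 2
        + s ^ 4 / 2 * ∑ k ∈ Finset.range ℓ,
            gradNorm2 h (fun p => (φ (k + 1) p - 2 * φ k p + φ (k - 1) p) / s ^ 2) ^ 2
      = energyF α h (φ 0) := by
  have huhalf' (k) (hk : k < ℓ) := (huhalf k hk).2
  have hpotential :
      gradInner h uℓ uℓ = gradInner h (potentialSeq uhalf ℓ) (potentialSeq uhalf ℓ) :=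
    gradInner_self_eq_of_neg_lapH huℓ.2 (neg_lapH_potentialSeq hψ0 huhalf' ℓ le_rfl)
  have hsecond : s ^ 4 / 2 * ∑ k ∈ range ℓ,
        gradNorm2 h (fun p => (φ (k + 1) p - 2 * φ k p + φ (k - 1) p) / s ^ 2) ^ 2
      = h ^ 2 * ∑ k ∈ range ℓ, gradInner h (fun p => φ (k + 1) p - 2 * φ k p + φ (k - 1) p)
          (fun p => φ (k + 1) p - 2 * φ k p + φ (k - 1) p) / 2 := by
    rw [mul_sum, mul_sum]
    refine sum_congr rfl fun k _ => ?_
    rw [gradNorm2_sq, gradInner_div_const]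
    field_simp
  rw [Ftilde_eq_mul_gridPseudoEnergy, gridPseudoEnergy, hpotential, ← gridPseudoEnergy, hsecond,
    energyF_eq_mul_gridEnergy, ← scheme_telescoped_energy hψ0 hScheme huhalf']
  simp only [gradNorm2_sq, ← mul_sum, sum_add_distrib]
  ring

/-- Global discrete pseudo-energy identity for the second-order convex splitting scheme,
with initializations `φ^{−1} := φ^0` (encoded by truncated subtraction `φ (k-1)`) and
`ψ^0 := 0`:
`F̃(φ^ℓ, φ^{ℓ−1}, ψ^ℓ) + s ∑_{k<ℓ} ‖ψ^{k+1/2}‖₋₁² + (s⁴/2) ∑_{k<ℓ} ‖∇ₕ(Dₛ²φ^k)‖₂²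
  = F(φ^0)`. -/
theorem scheme_global_energy_identity (m n : ℕ) [NeZero m] [NeZero n]
    (β α s h : ℝ) (hβ : 0 < β) (hα : 0 < α) (hs : 0 < s) (hh : 0 < h)
    (ℓ : ℕ) (φ ψ : ℕ → Grid m n)
    (hψ0 : ψ 0 = fun _ => 0)
    (hScheme : ∀ k < ℓ, Scheme β α s h (φ (k - 1)) (φ k) (ψ k) (φ (k + 1)) (ψ (k + 1)))
    (uhalf : ℕ → Grid m n) (uℓ : Grid m n)
    (huhalf : ∀ k < ℓ, IsNegLapSol h (fun p => (ψ (k + 1) p + ψ k p) / 2) (uhalf k))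
    (huℓ : IsNegLapSol h (ψ ℓ) uℓ) :
    Ftilde β α h (φ ℓ) (φ (ℓ - 1)) uℓ
        + s * ∑ k ∈ Finset.range ℓ, gradNorm2 h (uhalf k) ^ 2
        + s ^ 4 / 2 * ∑ k ∈ Finset.range ℓ,
            gradNorm2 h (fun p => (φ (k + 1) p - 2 * φ k p + φ (k - 1) p) / s ^ 2) ^ 2
      = energyF α h (φ 0) :=
  scheme_global_energy_identity_general m n β α s h hs ℓ φ ψ hψ0 hScheme uhalf uℓ huhalf huℓ
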